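/- arXiv:2108.07126 — 8 statements merged into one kernel-verified Lean document; each statement's English description precedes it below -/
import Mathlib

section
/- Let n be a finite type, H : Matrix n n ℂ a fixed matrix, and ρ₀ : Matrix n n ℂ. Define U(t) := exp(-i t H) and ρ(t) := U(t) * ρ₀ * (U(t))ᴴ, where ᴴ denotes the conjugate transpose. If H is Hermitian, then ρ(0) = ρ₀ and for every t ∈ ℝ, HasDerivAt ρ (-i • (H * ρ(t) - ρ(t) * H)) t; i.e. ρ solves the von Neumann equation ρ' = -i [H, ρ]. -/
/-!
As `H` is Hermitian, `U(t)ᴴ = exp(i t H)`, so `ρ(t) = exp(t A) ρ₀ exp(-t A)` with `A = -i H`.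
Since `exp(t A)` commutes with `A`, the product rule gives `ρ' = A ρ - ρ A = -i [H, ρ]`.
-/

open scoped Matrix

open NormedSpace in
theorem hasDerivAt_exp_smul_mul_mul_exp_smul {𝕂 𝔸 : Type*} [RCLike 𝕂] [NormedRing 𝔸]
    [NormedAlgebra 𝕂 𝔸] [CompleteSpace 𝔸] (A X B : 𝔸) (t : 𝕂) :
    HasDerivAt (fun s : 𝕂 => exp (s • A) * X * exp (s • B))
      (A * (exp (t • A) * X * exp (t • B)) + exp (t • A) * X * exp (t • B) * B) t :=
  (((hasDerivAt_exp_smul_const' A t).mul_const X).mul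
    (hasDerivAt_exp_smul_const B t)).congr_deriv (by simp only [mul_assoc])

theorem Matrix.IsHermitian.conjTranspose_exp_smul {n : Type*} [Fintype n] [DecidableEq n]
    {H : Matrix n n ℂ} (hH : H.IsHermitian) (c : ℂ) :
    (NormedSpace.exp (c • H))ᴴ = NormedSpace.exp (star c • H) := by
  rw [← Matrix.exp_conjTranspose, Matrix.conjTranspose_smul, hH.eq]

attribute [local instance] Matrix.normedAddCommGroup Matrix.normedSpace

/-- With `U(t) = exp(-i t H)` and `ρ(t) = U(t) ρ₀ U(t)ᴴ` for a Hermitian `H`, we have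
`ρ(0) = ρ₀` and `ρ` solves the von Neumann equation `ρ' = -i [H, ρ]`. -/
theorem stmt_1 {n : Type*} [Fintype n] [DecidableEq n]
    (H ρ₀ : Matrix n n ℂ) (hH : H.IsHermitian)
    (U : ℝ → Matrix n n ℂ)
    (hU : ∀ t : ℝ, U t = NormedSpace.exp ((-Complex.I * (t : ℂ)) • H))
    (ρ : ℝ → Matrix n n ℂ)
    (hρ : ∀ t : ℝ, ρ t = U t * ρ₀ * (U t)ᴴ) :
    ρ 0 = ρ₀ ∧ ∀ t : ℝ, HasDerivAt ρ ((-Complex.I) • (H * ρ t - ρ t * H)) t := by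
  have hρ_exp : ρ = fun t : ℝ => NormedSpace.exp (t • (-Complex.I • H)) * ρ₀ *
      NormedSpace.exp (t • (Complex.I • H)) := by
    funext t
    rw [hρ, hU, hH.conjTranspose_exp_smul]
    simp only [← Complex.coe_smul, smul_smul, star_mul', star_neg, Complex.star_def,
      Complex.conj_I, Complex.conj_ofReal, neg_neg, mul_comm]
  have hcommutator (X : Matrix n n ℂ) :
      -Complex.I • (H * X - X * H) = -Complex.I • H * X + X * (Complex.I • H) := by
    rw [Matrix.smul_mul, Matrix.mul_smul]
    module
  refine ⟨by simp [hρ_exp], fun t => ?_⟩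
  rw [hcommutator, hρ_exp]
  let _ := Matrix.linftyOpNormedRing (n := n) (α := ℂ)
  let _ := Matrix.linftyOpNormedAlgebra (n := n) (R := ℝ) (α := ℂ)
  -- Instance search sees the uniformity of `Matrix.normedAddCommGroup`, not the defeq one of
  -- the operator norm, so completeness for the latter is supplied by hand.
  have : @CompleteSpace (Matrix n n ℂ) PseudoMetricSpace.toUniformSpace := Pi.complete _
  exact hasDerivAt_exp_smul_mul_mul_exp_smul (-Complex.I • H) ρ₀ (Complex.I • H) t
end

section
/- Let n be a finite type, H : ℝ → Matrix n n ℂ a continuous function, T > 0, and suppose U : ℝ → Matrix n n ℂ satisfies U(0) = 1 and HasDerivAt U (-i • (H(t) * U(t))) t for all t ∈ [0, T]. For N ∈ ℕ, N ≥ 1, set Δt := T/N and define the time-ordered Euler product P_N := exp(-i Δt • H((N-1)Δt)) * exp(-i Δt • H((N-2)Δt)) * ⋯ * exp(-i Δt • H(0)) (later times on the left). Then P_N converges to U(T) as N → ∞ (with respect to any norm on Matrix n n ℂ). -/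
/-!
Write the equation as `V' = B V` with `B = -i H`. On a slice `[a, a + h]` put `A = B a`.
Conjugating the exact solution by the frozen flow, `g s = exp ((a - s) • A) * V s`, gives
`g' s = exp ((a - s) • A) * ((B s - A) * V s)`, which is small by uniform continuity of `B`; so one
slice propagator `exp (h • A)` commits an error `o(h)`, uniformly in the slice. Every factor has
norm at most `exp (h * M)`, where `M` bounds `‖B‖` on `[0, T]`, so the local errors are propagated
with growth at most `exp (T * M)`, and the `N` of them add up to `o(1)` (Lady Windermere's fan).
-/

open Filter Topology NormedSpace Set

theorem le_natCast_mul_mul_pow_of_le_mul_add {x : ℕ → ℝ} {G δ : ℝ} {N : ℕ} (hG : 1 ≤ G)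
    (hδ : 0 ≤ δ) (h0 : x 0 ≤ 0) (hstep : ∀ k < N, x (k + 1) ≤ G * x k + δ) :
    x N ≤ N * δ * G ^ N := by
  suffices ∀ k ≤ N, x k ≤ k * δ * G ^ k from this N le_rfl
  intro k
  induction k with
  | zero => simpa using h0
  | succ k ih =>
    intro hk
    have hδG : δ ≤ δ * G ^ (k + 1) := le_mul_of_one_le_right hδ (one_le_pow₀ hG)
    calc x (k + 1) ≤ G * (k * δ * G ^ k) + δ :=
          (hstep k hk).trans (add_le_add_left (mul_le_mul_of_nonneg_left (ih (by omega))
            (zero_le_one.trans hG)) δ)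
      _ = k * δ * G ^ (k + 1) + δ := by ring
      _ ≤ (k + 1 : ℕ) * δ * G ^ (k + 1) := by push_cast; linarith

section BanachAlgebra

variable {𝔸 : Type*} [NormedRing 𝔸] [NormedAlgebra ℝ 𝔸]

theorem NormedSpace.norm_exp_le_exp_norm [NormOneClass 𝔸] (x : 𝔸) : ‖exp x‖ ≤ Real.exp ‖x‖ := by
  rw [Real.exp_eq_exp_ℝ, exp_eq_tsum_div, congrFun (exp_eq_tsum ℝ) x]
  refine (norm_tsum_le_tsum_norm (norm_expSeries_summable' x)).trans ?_
  refine Summable.tsum_le_tsum (fun k => ?_) (norm_expSeries_summable' x)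
    (Real.summable_pow_div_factorial ‖x‖)
  rw [norm_smul, norm_inv, Real.norm_natCast, div_eq_inv_mul]
  gcongr
  exact norm_pow_le x k

theorem NormedSpace.norm_exp_smul_le [NormOneClass 𝔸] (t : ℝ) (x : 𝔸) :
    ‖exp (t • x)‖ ≤ Real.exp (|t| * ‖x‖) := by
  simpa only [norm_smul, Real.norm_eq_abs] using norm_exp_le_exp_norm (t • x)

theorem norm_sub_exp_smul_mul_le [NormOneClass 𝔸] [CompleteSpace 𝔸] {V B : ℝ → 𝔸} {A : 𝔸}
    {a b ε K : ℝ} (hab : a ≤ b) (hV : ∀ s ∈ Icc a b, HasDerivWithinAt V (B s * V s) (Icc a b) s)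
    (hBA : ∀ s ∈ Icc a b, ‖B s - A‖ ≤ ε) (hVK : ∀ s ∈ Icc a b, ‖V s‖ ≤ K) :
    ‖V b - exp ((b - a) • A) * V a‖ ≤ Real.exp ((b - a) * ‖A‖) ^ 2 * (ε * K * (b - a)) := by
  set E : ℝ → 𝔸 := fun s => exp ((a - s) • A)
  have hE : ∀ s, HasDerivAt E (-(A * E s)) s := fun s => by
    have := (hasDerivAt_exp_smul_const' A (a - s)).scomp s ((hasDerivAt_id s).const_sub a)
    simpa [Function.comp_def, E] using this
  have hEA : ∀ s, Commute A (E s) := fun s => ((Commute.refl A).smul_right _).exp_right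
  have hEnorm : ∀ s ∈ Icc a b, ‖E s‖ ≤ Real.exp ((b - a) * ‖A‖) := fun s hs => by
    refine (norm_exp_smul_le _ _).trans (Real.exp_le_exp.2 ?_)
    rw [abs_of_nonpos (by linarith [hs.1])]
    gcongr
    linarith [hs.2]
  have hg : ∀ s ∈ Icc a b, HasDerivWithinAt (fun s => E s * V s)
      (E s * ((B s - A) * V s)) (Icc a b) s := fun s hs => by
    refine ((hE s).hasDerivWithinAt.mul (hV s hs)).congr_deriv ?_
    rw [neg_mul, (hEA s).eq, mul_assoc, sub_mul, mul_sub]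
    abel
  have hg_le : ∀ s ∈ Icc a b, ‖E s * ((B s - A) * V s)‖ ≤ Real.exp ((b - a) * ‖A‖) * (ε * K) :=
    fun s hs => (norm_mul_le _ _).trans <| mul_le_mul (hEnorm s hs)
      ((norm_mul_le _ _).trans (mul_le_mul (hBA s hs) (hVK s hs) (norm_nonneg _)
        ((norm_nonneg _).trans (hBA s hs)))) (norm_nonneg _) (Real.exp_nonneg _)
  have hmvt := (convex_Icc a b).norm_image_sub_le_of_norm_hasDerivWithin_le hg hg_le
    (left_mem_Icc.2 hab) (right_mem_Icc.2 hab)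
  have hinv : exp ((b - a) • A) * E b = 1 := by
    let +nondep : NormedAlgebra ℚ 𝔸 := .restrictScalars ℚ ℝ 𝔸
    rw [← exp_add_of_commute (((Commute.refl A).smul_left _).smul_right _), ← add_smul]
    simp
  have hsplit : V b - exp ((b - a) • A) * V a = exp ((b - a) • A) * (E b * V b - E a * V a) := by
    simp [E, mul_sub, ← mul_assoc, hinv]
  rw [Real.norm_eq_abs, abs_of_nonneg (sub_nonneg.2 hab)] at hmvt
  have hexp := norm_exp_smul_le (b - a) A
  rw [abs_of_nonneg (sub_nonneg.2 hab)] at hexp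
  rw [hsplit]
  calc _ ≤ ‖exp ((b - a) • A)‖ * ‖E b * V b - E a * V a‖ := norm_mul_le _ _
    _ ≤ Real.exp ((b - a) * ‖A‖) * (Real.exp ((b - a) * ‖A‖) * (ε * K) * (b - a)) := by gcongr
    _ = _ := by ring

noncomputable def timeOrderedExpProduct (B : ℝ → 𝔸) (h : ℝ) (N : ℕ) : 𝔸 :=
  ((List.range N).reverse.map fun k : ℕ => exp (h • B (k * h))).prod

@[simp]
theorem timeOrderedExpProduct_zero (B : ℝ → 𝔸) (h : ℝ) : timeOrderedExpProduct B h 0 = 1 := rfl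

theorem timeOrderedExpProduct_succ (B : ℝ → 𝔸) (h : ℝ) (N : ℕ) :
    timeOrderedExpProduct B h (N + 1) = exp (h • B (N * h)) * timeOrderedExpProduct B h N := by
  simp [timeOrderedExpProduct, List.range_succ]

theorem norm_timeOrderedExpProduct_mul_sub_le [NormOneClass 𝔸] [CompleteSpace 𝔸] {B V : ℝ → 𝔸}
    {h T M K ε : ℝ} {N : ℕ} (hh : 0 ≤ h) (hNh : N * h = T)
    (hV : ∀ t ∈ Icc 0 T, HasDerivWithinAt V (B t * V t) (Icc 0 T) t)
    (hBM : ∀ t ∈ Icc 0 T, ‖B t‖ ≤ M) (hVK : ∀ t ∈ Icc 0 T, ‖V t‖ ≤ K)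
    (hBε : ∀ s ∈ Icc 0 T, ∀ t ∈ Icc 0 T, |s - t| ≤ h → ‖B s - B t‖ ≤ ε) :
    ‖timeOrderedExpProduct B h N * V 0 - V T‖ ≤ T * (ε * K) * Real.exp (h * M) ^ (N + 2) := by
  have hT : 0 ≤ T := hNh ▸ mul_nonneg N.cast_nonneg hh
  have h0 : (0 : ℝ) ∈ Icc 0 T := left_mem_Icc.2 hT
  have hM : 0 ≤ M := (norm_nonneg _).trans (hBM 0 h0)
  have hK : 0 ≤ K := (norm_nonneg _).trans (hVK 0 h0)
  have hε : 0 ≤ ε := (norm_nonneg _).trans (hBε 0 h0 0 h0 (by simpa using hh))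
  set P := timeOrderedExpProduct B h
  set G := Real.exp (h * M)
  have hG : 1 ≤ G := Real.one_le_exp (mul_nonneg hh hM)
  have hstep : ∀ k < N, ‖P (k + 1) * V 0 - V ((k + 1 : ℕ) * h)‖
      ≤ G * ‖P k * V 0 - V (k * h)‖ + G ^ 2 * (ε * K * h) := by
    intro k hk
    have hkh : (k : ℝ) * h + h ≤ T := by
      have : (k : ℝ) + 1 ≤ N := by exact_mod_cast hk
      rw [← hNh]; nlinarith
    have hsub : Icc (k * h) (k * h + h) ⊆ Icc 0 T := Icc_subset_Icc (by positivity) hkh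
    have hk_mem : (k : ℝ) * h ∈ Icc 0 T := hsub (left_mem_Icc.2 (by linarith))
    have hBk : Real.exp (h * ‖B (k * h)‖) ≤ G :=
      Real.exp_le_exp.2 (mul_le_mul_of_nonneg_left (hBM _ hk_mem) hh)
    have hfactor : ‖exp (h • B (k * h))‖ ≤ G :=
      (norm_exp_smul_le h (B (k * h))).trans (by rwa [abs_of_nonneg hh])
    have hlocal := norm_sub_exp_smul_mul_le (A := B (k * h)) (le_add_of_nonneg_right hh)
      (fun s hs => (hV s (hsub hs)).mono hsub)
      (fun s hs => hBε s (hsub hs) _ hk_mem (abs_le.2 ⟨by linarith [hs.1], by linarith [hs.2]⟩))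
      (fun s hs => hVK s (hsub hs))
    rw [add_sub_cancel_left] at hlocal
    rw [show P (k + 1) = _ from timeOrderedExpProduct_succ B h k, Nat.cast_succ, add_mul, one_mul]
    calc ‖exp (h • B (k * h)) * P k * V 0 - V (k * h + h)‖
        = ‖exp (h • B (k * h)) * (P k * V 0 - V (k * h))
            - (V (k * h + h) - exp (h • B (k * h)) * V (k * h))‖ := by congr 1; noncomm_ring
      _ ≤ ‖exp (h • B (k * h))‖ * ‖P k * V 0 - V (k * h)‖
            + ‖V (k * h + h) - exp (h • B (k * h)) * V (k * h)‖ :=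
          (norm_sub_le _ _).trans (add_le_add_left (norm_mul_le _ _) _)
      _ ≤ G * ‖P k * V 0 - V (k * h)‖ + G ^ 2 * (ε * K * h) := by
          gcongr
          exact hlocal.trans (by gcongr)
  have hgronwall := le_natCast_mul_mul_pow_of_le_mul_add
    (x := fun k => ‖P k * V 0 - V (k * h)‖) hG (by positivity) (by simp [P]) hstep
  calc ‖P N * V 0 - V T‖ ≤ N * (G ^ 2 * (ε * K * h)) * G ^ N := by simpa [hNh] using hgronwall
    _ = T * (ε * K) * G ^ (N + 2) := by rw [← hNh]; ring

theorem tendsto_timeOrderedExpProduct_mul [NormOneClass 𝔸] [CompleteSpace 𝔸] {B V : ℝ → 𝔸}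
    {T : ℝ} (hT : 0 ≤ T) (hB : ContinuousOn B (Icc 0 T))
    (hV : ∀ t ∈ Icc 0 T, HasDerivWithinAt V (B t * V t) (Icc 0 T) t) :
    Tendsto (fun N : ℕ => timeOrderedExpProduct B (T / N) N * V 0) atTop (𝓝 (V T)) := by
  obtain ⟨M, hBM⟩ := isCompact_Icc.exists_bound_of_continuousOn hB
  obtain ⟨K, hVK⟩ :=
    isCompact_Icc.exists_bound_of_continuousOn fun t ht => (hV t ht).continuousWithinAt
  have h0 : (0 : ℝ) ∈ Icc 0 T := left_mem_Icc.2 hT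
  have hM : 0 ≤ M := (norm_nonneg _).trans (hBM 0 h0)
  have hK : 0 ≤ K := (norm_nonneg _).trans (hVK 0 h0)
  set C := T * K * Real.exp (T * M) ^ 3
  rw [Metric.tendsto_nhds]
  intro η hη
  obtain ⟨ε, hε, hCε⟩ : ∃ ε > 0, C * ε < η :=
    ⟨η / (C + 1), by positivity, by rw [mul_div_assoc', div_lt_iff₀ (by positivity)]; nlinarith⟩
  obtain ⟨δ, hδ, hBδ⟩ := Metric.uniformContinuousOn_iff_le.1
    (isCompact_Icc.uniformContinuousOn_of_continuous hB) ε hε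
  filter_upwards [(tendsto_const_div_atTop_nhds_zero_nat T).eventually (eventually_le_nhds hδ),
    eventually_ge_atTop 1] with N hNδ hN
  have hN' : (1 : ℝ) ≤ N := by exact_mod_cast hN
  have hhM : T / N * M ≤ T * M := by gcongr; exact div_le_self hT hN'
  rw [dist_eq_norm]
  calc _ ≤ T * (ε * K) * Real.exp (T / N * M) ^ (N + 2) :=
        norm_timeOrderedExpProduct_mul_sub_le (by positivity) (by field_simp) hV hBM hVK
          fun s hs t ht hst => by simpa only [dist_eq_norm] using hBδ s hs t ht (hst.trans hNδ)
    _ = T * (ε * K) * (Real.exp (T * M) * Real.exp (T / N * M) ^ 2) := by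
        rw [pow_add, ← Real.exp_nat_mul]; field_simp
    _ ≤ C * ε := by
        have := Real.exp_le_exp.2 hhM
        have := Real.exp_pos (T / N * M)
        rw [show C * ε = T * (ε * K) * (Real.exp (T * M) * Real.exp (T * M) ^ 2) by ring]
        gcongr
    _ < η := hCε

end BanachAlgebra

section MatrixSchrodinger

-- A submultiplicative norm; it induces the same topology as the entrywise norm of the statement.
attribute [local instance] Matrix.linftyOpNormedRing Matrix.linftyOpNormedAlgebra

theorem Matrix.tendsto_prod_exp_mul_of_hasDerivWithinAt_schrodinger {n : Type*} [Fintype n]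
    [DecidableEq n] [Nonempty n] {H U : ℝ → Matrix n n ℂ} {T : ℝ} (hT : 0 ≤ T)
    (hH : ContinuousOn H (Icc 0 T))
    (hU : ∀ t ∈ Icc 0 T, HasDerivWithinAt U (-Complex.I • (H t * U t)) (Icc 0 T) t) :
    Tendsto (fun N : ℕ => ((List.range N).reverse.map fun k : ℕ =>
        exp ((-Complex.I * ((T / N : ℝ) : ℂ)) • H (k * (T / N)))).prod * U 0)
      atTop (𝓝 (U T)) := by
  have hsmul (r : ℝ) (X : Matrix n n ℂ) : (-Complex.I * (r : ℂ)) • X = r • (-Complex.I • X) := by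
    rw [mul_comm, mul_smul, Complex.coe_smul]
  have hB : ContinuousOn (fun t => -Complex.I • H t) (Icc 0 T) := by fun_prop
  have hV (t : ℝ) (ht : t ∈ Icc 0 T) :
      HasDerivWithinAt U ((-Complex.I • H t) * U t) (Icc 0 T) t := by
    simpa only [smul_mul_assoc] using hU t ht
  refine (tendsto_timeOrderedExpProduct_mul hT hB hV).congr fun N => ?_
  simp only [timeOrderedExpProduct, hsmul]
  -- the two sides differ only in the instance through which matrix multiplication is found
  rfl

end MatrixSchrodinger

open scoped Matrix

attribute [local instance] Matrix.normedAddCommGroup Matrix.normedSpace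

/-- Convergence of the time-ordered Euler product of slice propagators
`exp(-i Δt H(k Δt))` (later times on the left) to the exact propagator `U(T)`. -/
theorem stmt_2 {n : Type*} [Fintype n] [DecidableEq n]
    (H : ℝ → Matrix n n ℂ) (hHcont : Continuous H)
    (T : ℝ) (hT : 0 < T)
    (U : ℝ → Matrix n n ℂ) (hU0 : U 0 = 1)
    (hU : ∀ t ∈ Set.Icc (0 : ℝ) T, HasDerivAt U ((-Complex.I) • (H t * U t)) t) :
    Filter.Tendsto
      (fun N : ℕ =>
        (((List.range N).reverse).map
          (fun k : ℕ =>
            NormedSpace.exp ((-Complex.I * ((T / N : ℝ) : ℂ)) • H (k * (T / N))))).prod)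
      Filter.atTop (nhds (U T)) := by
  rcases isEmpty_or_nonempty n with hn | hn
  · exact tendsto_const_nhds.congr fun N => Subsingleton.elim _ _
  simpa [hU0] using Matrix.tendsto_prod_exp_mul_of_hasDerivWithinAt_schrodinger hT.le
    hHcont.continuousOn fun t ht => (hU t ht).hasDerivWithinAt
end

section
/- Let R be a commutative ring, X an element of a (possibly noncommutative) R-algebra A (e.g. A = Matrix n n ℂ with R = ℂ), m ∈ ℕ, and c : ℕ → R coefficients. Define the Clenshaw iterates by D_{m+2} = 0, D_{m+1} = 0 and, downward for k = m, m-1, …, 0, D_k := c_k • 1 + 2 • (X * D_{k+1}) - D_{k+2}. Then D_0 - D_2 = c_0 • 1 + 2 • ∑_{k=1}^{m} c_k • T_k(X), where T_k is the k-th Chebyshev polynomial of the first kind evaluated at X via the polynomial algebra map. -/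
open Finset Polynomial Polynomial.Chebyshev

/-- Correctness of the Clenshaw recurrence: if `D (m+2) = D (m+1) = 0` and
`D k = c k • 1 + 2 (X * D (k+1)) - D (k+2)` for `k = m, …, 0`, then
`D 0 - D 2 = c 0 • 1 + 2 ∑_{k=1}^m c k • T_k(X)`. -/
theorem stmt_3 {R A : Type*} [CommRing R] [Ring A] [Algebra R A]
    (X : A) (m : ℕ) (c : ℕ → R) (D : ℕ → A)
    (hD2 : D (m + 2) = 0) (hD1 : D (m + 1) = 0)
    (hrec : ∀ k ≤ m, D k = c k • (1 : A) + 2 • (X * D (k + 1)) - D (k + 2)) :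
    D 0 - D 2 = c 0 • (1 : A) +
      2 • ∑ k ∈ Finset.Icc 1 m,
        c k • (Polynomial.aeval X (Polynomial.Chebyshev.T R (k : ℤ))) := by
  set u : ℤ → A := fun n => Polynomial.aeval X (Polynomial.Chebyshev.U R n) with hudef
  set S : ℕ → A := fun j => ∑ k ∈ Finset.Icc j m, c k • u ((k : ℤ) - j) with hSdef
  have hu : ∀ n : ℤ, u n = 2 • (X * u (n - 1)) - u (n - 2) := by
    intro n
    have := congrArg (Polynomial.aeval X) (Polynomial.Chebyshev.U_eq R n)
    simp only [map_sub, map_mul, map_ofNat, Polynomial.aeval_X] at this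
    simp only [hudef]
    rw [this, two_smul, two_mul, add_mul]
  -- S satisfies the same recurrence
  have hSempty : ∀ j, m < j → S j = 0 := by
    intro j hj
    simp [hSdef, Finset.Icc_eq_empty_of_lt hj]
  have hSrec : ∀ j ≤ m, S j = c j • (1 : A) + 2 • (X * S (j + 1)) - S (j + 2) := by
    intro j hj
    have h1 : S j = c j • (1 : A) + ∑ k ∈ Finset.Icc (j+1) m, c k • u ((k : ℤ) - j) := by
      rw [hSdef]
      simp only
      rw [Finset.Icc_eq_cons_Ioc hj, Finset.sum_cons, ← Finset.Icc_add_one_left_eq_Ioc]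
      simp [hudef]
    have h2 : S (j + 2) = ∑ k ∈ Finset.Icc (j+1) m, c k • u ((k : ℤ) - j - 2) := by
      rw [hSdef]
      simp only
      rw [Finset.sum_subset (Finset.Icc_subset_Icc_left (show j+1 ≤ j+2 by omega))]
      · apply Finset.sum_congr rfl
        intro k hk
        congr 1
        push_cast
        ring
      · intro k hk hk2
        simp only [Finset.mem_Icc] at hk hk2
        have : k = j + 1 := by omega
        subst this
        have : ((j:ℤ) + 1) - j = 1 := by ring
        simp [hudef, this]
    have h3 : 2 • (X * S (j + 1)) = ∑ k ∈ Finset.Icc (j+1) m, c k • (2 • (X * u ((k : ℤ) - j - 1))) := by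
      rw [hSdef]
      simp only
      rw [Finset.mul_sum, Finset.smul_sum]
      apply Finset.sum_congr rfl
      intro k hk
      rw [mul_smul_comm, smul_comm]
      congr 2
      push_cast
      ring
    rw [h1, h2, h3, add_sub_assoc, ← Finset.sum_sub_distrib]
    congr 1
    apply Finset.sum_congr rfl
    intro k hk
    rw [← smul_sub, ← hu]
  -- D = S by downward induction
  have key : ∀ d j, j + d = m + 2 → D j = S j := by
    intro d
    induction d using Nat.strong_induction_on with
    | _ d ih =>
      intro j hj
      match d, hj with
      | 0, hj =>
        have : j = m + 2 := by omega
        subst this; rw [hD2, hSempty _ (by omega)]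
      | 1, hj =>
        have : j = m + 1 := by omega
        subst this; rw [hD1, hSempty _ (by omega)]
      | (d+2), hj =>
        have hjm : j ≤ m := by omega
        rw [hrec j hjm, hSrec j hjm,
          ih (d+1) (by omega) (j+1) (by omega),
          ih d (by omega) (j+2) (by omega)]
  have hD0 : D 0 = S 0 := key (m+2) 0 (by omega)
  have hD2' : D 2 = S 2 := by
    rcases Nat.lt_or_ge m 1 with h | h
    · interval_cases m
      · rw [hD2, hSempty 2 (by omega)]
    · exact key m 2 (by omega)
  rw [hD0, hD2']
  -- now compute S 0 - S 2
  have hS0 : S 0 = c 0 • (1 : A) + ∑ k ∈ Finset.Icc 1 m, c k • u k := by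
    rcases Nat.lt_or_ge m 1 with h | h
    · interval_cases m
      · simp [hSdef, hudef]
    · rw [hSdef]
      simp only
      rw [Finset.Icc_eq_cons_Ioc (by omega : 0 ≤ m), Finset.sum_cons, ← Finset.Icc_add_one_left_eq_Ioc]
      simp only [Nat.cast_zero, sub_zero]
      congr 1
      simp [hudef]
  have hS2 : S 2 = ∑ k ∈ Finset.Icc 1 m, c k • u ((k : ℤ) - 2) := by
    rw [hSdef]
    simp only
    rw [Finset.sum_subset (Finset.Icc_subset_Icc_left (show 1 ≤ 2 by omega))]
    · apply Finset.sum_congr rfl; intro k hk; norm_num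
    · intro k hk hk2
      simp only [Finset.mem_Icc] at hk hk2
      have : k = 1 := by omega
      subst this
      norm_num [hudef]
  rw [hS0, hS2, add_sub_assoc, ← Finset.sum_sub_distrib]
  congr 1
  rw [Finset.smul_sum]
  apply Finset.sum_congr rfl
  intro k hk
  rw [← smul_sub, smul_comm]
  congr 1
  have hT : Polynomial.Chebyshev.U R k - Polynomial.Chebyshev.U R ((k:ℤ) - 2)
      = 2 * Polynomial.Chebyshev.T R k := by
    have h1 := Polynomial.Chebyshev.U_sub_two R (k : ℤ)
    have h2 := Polynomial.Chebyshev.T_eq_U_sub_X_mul_U R (k : ℤ)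
    linear_combination -h1 - 2 * h2
  have := congrArg (Polynomial.aeval X) hT
  simp only [map_sub, map_mul, map_ofNat, Polynomial.aeval_X] at this
  simp only [hudef]
  rw [this, two_smul, two_mul]
end

section
/- For ω ∈ ℝ and k ∈ ℕ, define a_k(ω) := (1/π) ∫_{0}^{π} exp(i ω cos θ) cos(k θ) dθ ∈ ℂ. Then for every x ∈ [-1, 1], the series a_0(ω) + 2 ∑_{k=1}^{∞} a_k(ω) · T_k(x) converges and its sum equals exp(i ω x), where T_k is the k-th Chebyshev polynomial of the first kind evaluated at x. -/
/-!
The function `t ↦ exp (i ω cos t)` is smooth, even and `2π`-periodic. By evenness its Fourier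
coefficients on `[-π, π]` are the `a_|n|`, and two integrations by parts bound them by `O(1/n²)`;
so its Fourier series converges absolutely, and pointwise to the function. Pairing the terms `n`
and `-n` turns `exp (i n θ)` into `2 cos (n θ) = 2 T_n (cos θ)`; then put `θ = arccos x`.
-/

open Complex Real Set Filter Topology MeasureTheory

section FourierInterval

variable {a b : ℝ} (hab : a < b)

lemma norm_fourierCoeffOn_le {f : ℝ → ℂ} {M : ℝ} (hM : ∀ x ∈ Icc a b, ‖f x‖ ≤ M) (n : ℤ) :
    ‖fourierCoeffOn hab f n‖ ≤ M := by
  have hba : 0 < b - a := sub_pos.mpr hab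
  have hint : ‖∫ x in a..b, fourier (-n) (x : AddCircle (b - a)) • f x‖ ≤ M * (b - a) := by
    rw [← abs_of_pos hba]
    refine intervalIntegral.norm_integral_le_of_norm_le_const fun x hx => ?_
    rw [norm_smul, fourier_apply, Circle.norm_coe, one_mul]
    rw [uIoc_of_le hab.le] at hx
    exact hM x (Ioc_subset_Icc_self hx)
  rw [fourierCoeffOn_eq_integral, norm_smul, norm_div, norm_one, Real.norm_of_nonneg hba.le]
  calc 1 / (b - a) * ‖_‖ ≤ 1 / (b - a) * (M * (b - a)) := by gcongr
    _ = M := by field_simp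

lemma fourierCoeffOn_eq_mul_fourierCoeffOn_deriv {f f' : ℝ → ℂ}
    (hf : ∀ x ∈ Icc a b, HasDerivAt f (f' x) x) (hf' : IntervalIntegrable f' volume a b)
    (hper : f b = f a) {n : ℤ} (hn : n ≠ 0) :
    fourierCoeffOn hab f n = (b - a) / (2 * π * I * n) * fourierCoeffOn hab f' n := by
  rw [fourierCoeffOn_of_hasDerivAt hab hn (by rwa [uIcc_of_le hab.le]) hf', hper]
  have : (n : ℂ) ≠ 0 := Int.cast_ne_zero.mpr hn
  field_simp
  ring

lemma summable_fourierCoeffOn_of_hasDerivAt {f f' f'' : ℝ → ℂ}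
    (hf : ∀ x ∈ Icc a b, HasDerivAt f (f' x) x) (hf' : ∀ x ∈ Icc a b, HasDerivAt f' (f'' x) x)
    (hf'' : ContinuousOn f'' (Icc a b)) (hper : f b = f a) (hper' : f' b = f' a) :
    Summable (fourierCoeffOn hab f) := by
  obtain ⟨M, hM⟩ := isCompact_Icc.exists_bound_of_continuousOn hf''
  have hf'_int : IntervalIntegrable f' volume a b :=
    ContinuousOn.intervalIntegrable fun x hx =>
      (hf' x (by rwa [uIcc_of_le hab.le] at hx)).continuousAt.continuousWithinAt
  have hf''_int : IntervalIntegrable f'' volume a b :=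
    hf''.intervalIntegrable_of_Icc hab.le
  refine Summable.of_norm_bounded_eventually
    ((Real.summable_one_div_int_pow.mpr one_lt_two).mul_left (((b - a) / (2 * π)) ^ 2 * M)) ?_
  filter_upwards [eventually_cofinite_ne 0] with n hn
  have hfactor : ‖(b - a) / (2 * π * I * n) * ((b - a) / (2 * π * I * n))‖
      = ((b - a) / (2 * π)) ^ 2 * (1 / (n : ℝ) ^ 2) := by
    rw [← sq, norm_pow, ← ofReal_sub]
    simp only [norm_div, norm_mul, Complex.norm_real, Complex.norm_I, Complex.norm_intCast,
      Complex.norm_ofNat, Real.norm_of_nonneg pi_pos.le, Real.norm_of_nonneg (sub_pos.mpr hab).le]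
    field_simp
    rw [sq_abs]
  rw [fourierCoeffOn_eq_mul_fourierCoeffOn_deriv hab hf hf'_int hper hn,
    fourierCoeffOn_eq_mul_fourierCoeffOn_deriv hab hf' hf''_int hper' hn, ← mul_assoc, norm_mul,
    hfactor, mul_right_comm]
  gcongr
  exact norm_fourierCoeffOn_le hab hM n

lemma hasSum_fourierCoeffOn_mul_exp {f : ℝ → ℂ} (hf : ContinuousOn f (Icc a b)) (hper : f b = f a)
    (hs : Summable (fourierCoeffOn hab f)) {x : ℝ} (hx : x ∈ Icc a b) :
    HasSum (fun n : ℤ => fourierCoeffOn hab f n * exp (2 * π * I * n * x / (b - a))) (f x) := by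
  have : Fact (0 < b - a) := ⟨sub_pos.mpr hab⟩
  have hb : a + (b - a) = b := add_sub_cancel a b
  let F : C(AddCircle (b - a), ℂ) :=
    ⟨AddCircle.liftIoc (b - a) a f, AddCircle.liftIoc_continuous (by rw [hb, hper]) (by rwa [hb])⟩
  -- `liftIoc` takes the value `f b` at the point `a`, hence the periodicity hypothesis.
  have hFx : F x = f x := by
    rcases hx.1.eq_or_lt with rfl | hax
    · rw [← AddCircle.coe_add_period (b - a) a]
      change AddCircle.liftIoc (b - a) a f _ = _
      rw [AddCircle.liftIoc_coe_apply ⟨by linarith, le_rfl⟩, hb, hper]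
    · exact AddCircle.liftIoc_coe_apply ⟨hax, by rw [hb]; exact hx.2⟩
  have hsum := has_pointwise_sum_fourier_series_of_summable (f := F) hs x
  rw [hFx] at hsum
  convert hsum using 2 with n
  rw [fourier_coe_apply, smul_eq_mul]
  push_cast
  rfl

end FourierInterval

lemma fourierCoeffOn_neg_pi_pi_of_even {f : ℝ → ℂ} (heven : Function.Even f)
    (hf : IntervalIntegrable f volume (-π) π) (n : ℤ) :
    fourierCoeffOn (neg_lt_self pi_pos) f n = 1 / π * ∫ θ in 0..π, f θ * Real.cos (n * θ) := by
  set g : ℝ → ℂ := fun x => exp (-(I * (n * x))) * f x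
  have hg : IntervalIntegrable g volume (-π) π :=
    hf.continuousOn_mul (by fun_prop)
  have hg_left : IntervalIntegrable g volume (-π) 0 :=
    hg.mono_set (uIcc_subset_uIcc left_mem_uIcc (by simp [uIcc_of_le, pi_pos.le]))
  have hg_right : IntervalIntegrable g volume 0 π :=
    hg.mono_set (uIcc_subset_uIcc (by simp [uIcc_of_le, pi_pos.le]) right_mem_uIcc)
  have hpair : ∀ x, g (-x) + g x = 2 * (f x * Real.cos (n * x)) := by
    intro x
    simp only [g, heven x, ofReal_cos, ofReal_mul, ofReal_intCast, Complex.cos, ofReal_neg]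
    ring_nf
  have hfold : ∫ x in -π..π, g x = 2 * ∫ x in 0..π, f x * Real.cos (n * x) := by
    have hreflect := intervalIntegral.integral_comp_neg (a := 0) (b := π) g
    rw [neg_zero] at hreflect
    rw [← intervalIntegral.integral_add_adjacent_intervals hg_left hg_right, ← hreflect,
      ← intervalIntegral.integral_add (by simpa using hg_left.symm.comp_sub_left 0) hg_right,
      ← intervalIntegral.integral_const_mul]
    simp only [hpair]
  have hkernel : ∀ x : ℝ, fourier (-n) (x : AddCircle (π - -π)) • f x = g x := by
    intro x
    rw [fourier_coe_apply, smul_eq_mul]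
    congr 2
    push_cast
    field_simp
    ring
  rw [fourierCoeffOn_eq_integral]
  simp only [hkernel, hfold, Complex.real_smul]
  push_cast
  field_simp
  ring

lemma HasSum.tendsto_add_sum_Icc_add_neg {G : Type*} [AddCommGroup G] [TopologicalSpace G]
    [IsTopologicalAddGroup G] {g : ℤ → G} {s : G} (h : HasSum g s) :
    Tendsto (fun m : ℕ => g 0 + ∑ k ∈ Finset.Icc 1 m, (g k + g (-k))) atTop (𝓝 s) := by
  have hpartial := (h.nat_add_neg.tendsto_sum_nat.comp (tendsto_add_atTop_nat 1)).sub_const (g 0)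
  rw [add_sub_cancel_right] at hpartial
  refine hpartial.congr fun m => ?_
  rw [Function.comp_apply, Finset.sum_range_succ', Finset.range_eq_Ico,
    Finset.sum_Ico_add' (fun k : ℕ => g k + g (-k)) 0 m 1, Nat.zero_add,
    Finset.Ico_add_one_right_eq_Icc]
  simp only [Nat.cast_zero, neg_zero]
  abel

lemma tendsto_chebyshev_sum_of_even {f : ℝ → ℂ} (heven : Function.Even f)
    (hf : ContinuousOn f (Icc (-π) π)) (hs : Summable (fourierCoeffOn (neg_lt_self pi_pos) f))
    {x : ℝ} (hx : x ∈ Icc (-1) 1) :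
    Tendsto (fun m : ℕ => fourierCoeffOn (neg_lt_self pi_pos) f 0 + 2 * ∑ k ∈ Finset.Icc 1 m,
        fourierCoeffOn (neg_lt_self pi_pos) f k * (((Polynomial.Chebyshev.T ℝ k).eval x : ℝ) : ℂ))
      atTop (𝓝 (f (arccos x))) := by
  have hφ : arccos x ∈ Icc (-π) π := ⟨by linarith [arccos_nonneg x, pi_pos], arccos_le_pi x⟩
  have hcoeff_neg (n : ℤ) :
      fourierCoeffOn (neg_lt_self pi_pos) f (-n) = fourierCoeffOn (neg_lt_self pi_pos) f n := by
    have hf_int : IntervalIntegrable f volume (-π) π :=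
      hf.intervalIntegrable_of_Icc (by linarith [pi_pos])
    simp only [fourierCoeffOn_neg_pi_pi_of_even heven hf_int, Int.cast_neg, neg_mul, Real.cos_neg]
  have hexp (y : ℂ) : 2 * π * I * y * arccos x / (π - ((-π : ℝ) : ℂ)) = y * arccos x * I := by
    push_cast
    field_simp
    ring
  have hT (k : ℕ) :
      (((Polynomial.Chebyshev.T ℝ k).eval x : ℝ) : ℂ) = Complex.cos (k * arccos x) := by
    conv_lhs => rw [← cos_arccos hx.1 hx.2]
    rw [Polynomial.Chebyshev.T_real_cos]
    push_cast
    rfl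
  refine ((hasSum_fourierCoeffOn_mul_exp _ hf (by rw [← neg_neg π, heven, neg_neg]) hs
    hφ).tendsto_add_sum_Icc_add_neg).congr fun m => ?_
  simp only [hexp, hcoeff_neg, hT, Int.cast_zero, zero_mul, Complex.exp_zero, mul_one, Int.cast_neg,
    Int.cast_natCast, Finset.mul_sum]
  congr 1
  refine Finset.sum_congr rfl fun k _ => ?_
  rw [← mul_add, neg_mul, ← two_cos]
  ring

lemma hasDerivAt_exp_I_mul_cos (ω t : ℝ) :
    HasDerivAt (fun t : ℝ => exp (I * ω * Real.cos t))
      (-(I * ω * Real.sin t) * exp (I * ω * Real.cos t)) t := by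
  convert ((Real.hasDerivAt_cos t).ofReal_comp.const_mul (I * ω)).cexp using 1
  push_cast
  ring

lemma summable_fourierCoeffOn_exp_I_mul_cos (ω : ℝ) :
    Summable (fourierCoeffOn (neg_lt_self pi_pos) fun t : ℝ => exp (I * ω * Real.cos t)) :=
  summable_fourierCoeffOn_of_hasDerivAt _ (fun t _ => hasDerivAt_exp_I_mul_cos ω t)
    (fun t _ => ((Real.hasDerivAt_sin t).ofReal_comp.const_mul (I * ω)).neg.mul
      (hasDerivAt_exp_I_mul_cos ω t)) (by fun_prop) (by simp) (by simp)

/-- Jacobi–Anger / Chebyshev expansion of `e^{iωx}` on `[-1,1]`: with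
`a_k(ω) = (1/π) ∫₀^π e^{iω cos θ} cos(kθ) dθ`, for every `x ∈ [-1,1]` the series
`a_0 + 2 ∑_{k≥1} a_k T_k(x)` converges to `e^{iωx}`. -/
theorem stmt_4 (ω : ℝ) (a : ℕ → ℂ)
    (ha : ∀ k : ℕ, a k = (1 / (Real.pi : ℂ)) *
      ∫ θ in (0 : ℝ)..Real.pi,
        Complex.exp (Complex.I * (ω : ℂ) * (Real.cos θ : ℂ)) * (Real.cos (k * θ) : ℂ)) :
    ∀ x ∈ Set.Icc (-1 : ℝ) 1,
      Filter.Tendsto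
        (fun m : ℕ => a 0 + 2 * ∑ k ∈ Finset.Icc 1 m,
          a k * (((Polynomial.Chebyshev.T ℝ (k : ℤ)).eval x : ℝ) : ℂ))
        Filter.atTop (nhds (Complex.exp (Complex.I * (ω : ℂ) * (x : ℂ)))) := by
  intro x hx
  have heven : Function.Even fun t : ℝ => exp (I * ω * Real.cos t) := fun t => by simp
  have hcoeff (k : ℕ) :
      fourierCoeffOn (neg_lt_self pi_pos) (fun t : ℝ => exp (I * ω * Real.cos t)) k = a k := by
    rw [fourierCoeffOn_neg_pi_pi_of_even heven (Continuous.intervalIntegrable (by fun_prop) _ _),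
      ha, Int.cast_natCast]
  have hlim := tendsto_chebyshev_sum_of_even heven (by fun_prop)
    (summable_fourierCoeffOn_exp_I_mul_cos ω) hx
  have hcoeff_zero :
      fourierCoeffOn (neg_lt_self pi_pos) (fun t : ℝ => exp (I * ω * Real.cos t)) 0 = a 0 :=
    hcoeff 0
  simp only [hcoeff, hcoeff_zero] at hlim
  rwa [cos_arccos hx.1 hx.2] at hlim
end

section
/- Let n be a finite type, G : Matrix n n ℂ a Hermitian matrix all of whose eigenvalues lie in the real interval [α, β], and p : Polynomial ℂ. Then, with respect to the ℓ²→ℓ² operator norm on Matrix n n ℂ, ‖exp(-i G) - p(G)‖ ≤ sup_{x ∈ [α, β]} ‖exp(-i x) - p.eval x‖, where p(G) denotes evaluation of p at G via the polynomial algebra map. -/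
/-!
Both `exp(-iG)` and `p(G)` are values of the continuous functional calculus of the normal
element `G`, so their difference is `f(G)` for `f x = exp(-ix) - p(x)`. In a C⋆-algebra the
functional calculus is isometric, hence `‖f(G)‖` is bounded by the sup of `|f|` over the
spectrum of `G`, which consists of the eigenvalues and so lies in `[α, β]`.
-/

open scoped Matrix.Norms.L2Operator

theorem IsCompact.le_ciSup₂_of_continuousOn {X α : Type*} [TopologicalSpace X]
    [ConditionallyCompleteLinearOrder α] [TopologicalSpace α] [OrderTopology α]
    {s : Set X} (hs : IsCompact s) {f : X → α} (hf : ContinuousOn f s) {x : X} (hx : x ∈ s) :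
    f x ≤ ⨆ y ∈ s, f y :=
  le_ciSup₂ (f := fun y _ => f y) ((hs.image_of_continuousOn hf).bddAbove.mono <|
    Set.iUnion_subset fun _ => Set.range_subset_iff.2 (Set.mem_image_of_mem f)) x hx

theorem NormedSpace.exp_smul_eq_cfc {A : Type*} [CStarAlgebra A] (s : ℂ) (a : A)
    [IsStarNormal a] : NormedSpace.exp (s • a) = cfc (fun z => Complex.exp (s * z)) a := by
  rw [← CFC.complex_exp_eq_normedSpace_exp, ← cfc_comp_smul s Complex.exp a]
  rfl

/-- Spectral transfer: for Hermitian `G` with eigenvalues in `[α, β]` and a polynomial `p`,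
the ℓ²→ℓ² operator norm of `exp(-iG) - p(G)` is bounded by the sup of
`‖e^{-ix} - p(x)‖` over `x ∈ [α, β]`. -/
theorem stmt_8 {n : Type*} [Fintype n] [DecidableEq n]
    (G : Matrix n n ℂ) (hG : G.IsHermitian) (α β : ℝ)
    (heig : ∀ i, hG.eigenvalues i ∈ Set.Icc α β)
    (p : Polynomial ℂ) :
    ‖NormedSpace.exp ((-Complex.I) • G) - Polynomial.aeval G p‖ ≤
      ⨆ x ∈ Set.Icc α β, ‖Complex.exp (-Complex.I * (x : ℂ)) - p.eval (x : ℂ)‖ := by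
  have : IsStarNormal G := hG.isSelfAdjoint.isStarNormal
  rw [NormedSpace.exp_smul_eq_cfc, ← cfc_polynomial p G, ← cfc_sub _ _ G]
  refine norm_cfc_le (Real.iSup_nonneg fun _ => Real.iSup_nonneg fun _ => norm_nonneg _)
    fun z hz => ?_
  rw [hG.spectrum_eq_image_range] at hz
  obtain ⟨_, ⟨i, rfl⟩, rfl⟩ := hz
  exact isCompact_Icc.le_ciSup₂_of_continuousOn (f := fun x : ℝ =>
    ‖Complex.exp (-Complex.I * x) - p.eval (x : ℂ)‖) (by fun_prop) (heig i)
end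

section
/- Let n be a finite type, N ∈ ℕ, H₀, H₁, …, H_N : Matrix n n ℂ, Δt ∈ ℝ, and c_k^{(j)} ∈ ℝ for j ∈ {1,2,3}, k ∈ {1,…,N}. Set H^{(j)} := H₀ + ∑_{k=1}^{N} c_k^{(j)} • H_k. Then (Δt/3) • (H^{(1)} + 4 • H^{(2)} + H^{(3)}) - i (Δt²/3) • [H^{(1)}, H^{(3)}] = 2Δt • H₀ + Δt • ∑_{k=1}^{N} ((c_k^{(1)} + 4 c_k^{(2)} + c_k^{(3)})/3) • H_k - i (Δt²/3) • ∑_{k=1}^{N} (c_k^{(3)} - c_k^{(1)}) • [H₀, H_k] - i (Δt²/3) • ∑_{1 ≤ k < k' ≤ N} (c_k^{(1)} c_{k'}^{(3)} - c_k^{(3)} c_{k'}^{(1)}) • [H_k, H_{k'}]. -/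
open Finset in
lemma sum_pairs_aux {M : Type*} [AddCommMonoid M] (N : ℕ) (g : ℕ → ℕ → M) :
    ∑ k ∈ Icc 1 N, ∑ k' ∈ Icc 1 N, g k k'
      = (∑ k ∈ Icc 1 N, ∑ k' ∈ Ioc k N, (g k k' + g k' k)) + ∑ k ∈ Icc 1 N, g k k := by
  have hsplit : ∀ k ∈ Icc 1 N, ∑ k' ∈ Icc 1 N, g k k'
      = ∑ k' ∈ Icc 1 k, g k k' + ∑ k' ∈ Ioc k N, g k k' := by
    intro k hk
    simp only [mem_Icc] at hk
    have hunion : Icc 1 k ∪ Ioc k N = Icc 1 N := by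
      ext x; simp only [mem_union, mem_Icc, mem_Ioc]; omega
    have hdisj : Disjoint (Icc 1 k) (Ioc k N) := by
      simp only [Finset.disjoint_left, mem_Icc, mem_Ioc]
      omega
    rw [← hunion, Finset.sum_union hdisj]
  have hswap : ∑ k ∈ Icc 1 N, ∑ k' ∈ Icc 1 k, g k k'
      = ∑ k' ∈ Icc 1 N, ∑ k ∈ Icc k' N, g k k' := by
    apply Finset.sum_comm'
    intro x y
    simp only [mem_Icc]
    omega
  have hdiag : ∀ k' ∈ Icc 1 N, ∑ k ∈ Icc k' N, g k k'
      = g k' k' + ∑ k ∈ Ioc k' N, g k k' := by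
    intro k' hk'
    simp only [mem_Icc] at hk'
    rw [Finset.Icc_eq_cons_Ioc hk'.2, Finset.sum_cons]
  rw [Finset.sum_congr rfl hsplit, Finset.sum_add_distrib, hswap,
    Finset.sum_congr rfl hdiag, Finset.sum_add_distrib]
  simp only [Finset.sum_add_distrib]
  abel

/-- The algebraic identity behind the fourth-order Magnus exponent (eq. (12) of the paper):
with `H⁽ʲ⁾ = H₀ + ∑_{k=1}^N c_k⁽ʲ⁾ • H_k`, the Magnus exponent
`(Δt/3)(H⁽¹⁾ + 4H⁽²⁾ + H⁽³⁾) - i(Δt²/3)[H⁽¹⁾, H⁽³⁾]` equals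
`2Δt H₀ + Δt ∑_k ((c_k⁽¹⁾+4c_k⁽²⁾+c_k⁽³⁾)/3) H_k
 - i(Δt²/3) ∑_k (c_k⁽³⁾-c_k⁽¹⁾)[H₀,H_k]
 - i(Δt²/3) ∑_{k<k'} (c_k⁽¹⁾c_{k'}⁽³⁾ - c_k⁽³⁾c_{k'}⁽¹⁾)[H_k,H_{k'}]`. -/
theorem stmt_10 {n : Type*} [Fintype n] [DecidableEq n]
    (N : ℕ) (H : ℕ → Matrix n n ℂ) (Δt : ℝ) (c : ℕ → ℕ → ℝ)
    (Hc : ℕ → Matrix n n ℂ)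
    (hHc : ∀ j, Hc j = H 0 + ∑ k ∈ Finset.Icc 1 N, ((c j k : ℝ) : ℂ) • H k) :
    ((Δt : ℂ) / 3) • (Hc 1 + (4 : ℂ) • Hc 2 + Hc 3) -
        (Complex.I * (Δt : ℂ) ^ 2 / 3) • (Hc 1 * Hc 3 - Hc 3 * Hc 1) =
      (2 * (Δt : ℂ)) • H 0 +
        (Δt : ℂ) • ∑ k ∈ Finset.Icc 1 N,
          (((c 1 k + 4 * c 2 k + c 3 k) / 3 : ℝ) : ℂ) • H k -
        (Complex.I * (Δt : ℂ) ^ 2 / 3) • ∑ k ∈ Finset.Icc 1 N,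
          ((c 3 k - c 1 k : ℝ) : ℂ) • (H 0 * H k - H k * H 0) -
        (Complex.I * (Δt : ℂ) ^ 2 / 3) • ∑ k ∈ Finset.Icc 1 N, ∑ k' ∈ Finset.Ioc k N,
          ((c 1 k * c 3 k' - c 3 k * c 1 k' : ℝ) : ℂ) • (H k * H k' - H k' * H k) := by
  rw [hHc 1, hHc 2, hHc 3]
  set A := H 0 with hA
  set S1 := ∑ k ∈ Finset.Icc 1 N, ((c 1 k : ℝ) : ℂ) • H k with hS1
  set S2 := ∑ k ∈ Finset.Icc 1 N, ((c 2 k : ℝ) : ℂ) • H k with hS2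
  set S3 := ∑ k ∈ Finset.Icc 1 N, ((c 3 k : ℝ) : ℂ) • H k with hS3
  -- commutators with A
  have hAS1 : A * S1 - S1 * A
      = ∑ k ∈ Finset.Icc 1 N, ((c 1 k : ℝ) : ℂ) • (A * H k - H k * A) := by
    simp only [hS1, Finset.mul_sum, Finset.sum_mul, Matrix.mul_smul, Matrix.smul_mul,
      ← Finset.sum_sub_distrib, smul_sub]
  have hAS3 : A * S3 - S3 * A
      = ∑ k ∈ Finset.Icc 1 N, ((c 3 k : ℝ) : ℂ) • (A * H k - H k * A) := by
    simp only [hS3, Finset.mul_sum, Finset.sum_mul, Matrix.mul_smul, Matrix.smul_mul,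
      ← Finset.sum_sub_distrib, smul_sub]
  -- commutator of the two sums
  have h13 : S1 * S3 = ∑ k ∈ Finset.Icc 1 N, ∑ k' ∈ Finset.Icc 1 N,
      (((c 1 k * c 3 k' : ℝ)) : ℂ) • (H k * H k') := by
    simp only [hS1, hS3, Finset.sum_mul_sum, Matrix.smul_mul, Matrix.mul_smul, smul_smul,
      Complex.ofReal_mul]
    exact Finset.sum_congr rfl fun _ _ => Finset.sum_congr rfl fun _ _ => by rw [mul_comm]
  have h31 : S3 * S1 = ∑ k ∈ Finset.Icc 1 N, ∑ k' ∈ Finset.Icc 1 N,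
      (((c 1 k * c 3 k' : ℝ)) : ℂ) • (H k' * H k) := by
    rw [Finset.sum_comm]
    simp only [hS1, hS3, Finset.sum_mul_sum, Matrix.smul_mul, Matrix.mul_smul, smul_smul,
      Complex.ofReal_mul]
  have hSS : S1 * S3 - S3 * S1
      = ∑ k ∈ Finset.Icc 1 N, ∑ k' ∈ Finset.Icc 1 N,
          (((c 1 k * c 3 k' : ℝ)) : ℂ) • (H k * H k' - H k' * H k) := by
    rw [h13, h31, ← Finset.sum_sub_distrib]
    refine Finset.sum_congr rfl fun k _ => ?_
    rw [← Finset.sum_sub_distrib]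
    exact Finset.sum_congr rfl fun k' _ => (smul_sub _ _ _).symm
  -- reorganize the double sum over ordered pairs
  have hpairs : ∑ k ∈ Finset.Icc 1 N, ∑ k' ∈ Finset.Icc 1 N,
        (((c 1 k * c 3 k' : ℝ)) : ℂ) • (H k * H k' - H k' * H k)
      = ∑ k ∈ Finset.Icc 1 N, ∑ k' ∈ Finset.Ioc k N,
          ((c 1 k * c 3 k' - c 3 k * c 1 k' : ℝ) : ℂ) • (H k * H k' - H k' * H k) := by
    rw [sum_pairs_aux N (fun k k' => (((c 1 k * c 3 k' : ℝ)) : ℂ) • (H k * H k' - H k' * H k))]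
    simp only [sub_self, smul_zero, Finset.sum_const_zero, add_zero]
    refine Finset.sum_congr rfl fun k _ => Finset.sum_congr rfl fun k' _ => ?_
    push_cast
    module
  -- RHS middle sum
  have hU : ∑ k ∈ Finset.Icc 1 N, ((c 3 k - c 1 k : ℝ) : ℂ) • (A * H k - H k * A)
      = (A * S3 - S3 * A) - (A * S1 - S1 * A) := by
    rw [hAS1, hAS3, ← Finset.sum_sub_distrib]
    refine Finset.sum_congr rfl fun k _ => ?_
    push_cast
    module
  -- RHS first-order sum
  have hT : ∑ k ∈ Finset.Icc 1 N, (((c 1 k + 4 * c 2 k + c 3 k) / 3 : ℝ) : ℂ) • H k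
      = (3 : ℂ)⁻¹ • (S1 + (4 : ℂ) • S2 + S3) := by
    simp only [hS1, hS2, hS3, Finset.smul_sum, ← Finset.sum_add_distrib, smul_smul]
    refine Finset.sum_congr rfl fun k _ => ?_
    push_cast
    module
  -- expand the big commutator
  have hcomm : (A + S1) * (A + S3) - (A + S3) * (A + S1)
      = ((A * S3 - S3 * A) - (A * S1 - S1 * A)) + (S1 * S3 - S3 * S1) := by
    noncomm_ring
  rw [hcomm, hT, hU, ← hpairs, ← hSS]
  module
end

section
/- Let σ_x := !![0,1;1,0], σ_y := !![0,-i;i,0], σ_z := !![1,0;0,-1] be the Pauli matrices in Matrix (Fin 2) (Fin 2) ℂ and let ω₀, ω₁, ω_rf ∈ ℝ. Define H(t) := (ω₀/2) • σ_z + cos(ω_rf t) • ((ω₁/2) • σ_x) + sin(ω_rf t) • ((ω₁/2) • σ_y) and U(t) := exp(-i (ω_rf t / 2) • σ_z) * exp(-i t • (((ω₀ - ω_rf)/2) • σ_z + (ω₁/2) • σ_x)). Then U(0) = 1 and for every t ∈ ℝ, HasDerivAt U (-i • (H(t) * U(t))) t; i.e. U is the exact propagator of the circularly driven qubit. -/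
/-!
Write `U(t) = R V` with `R = exp (t • A)`, `V = exp (t • B)`, `A = -i (ω_rf/2) σ_z` and
`B = -i ((ω₀ - ω_rf)/2 σ_z + ω₁/2 σ_x)`. The product rule gives `U' = (A R + R B) V`.
Since `R = diag(e^{-iθ/2}, e^{iθ/2})` with `θ = ω_rf t`, it commutes with `σ_z` and satisfies
`R σ_x = (cos θ σ_x + sin θ σ_y) R`; hence `A R + R B = -i H(t) R`, i.e. `U' = -i H(t) U`.
-/

open NormedSpace Matrix

theorem hasDerivAt_exp_smul_mul_exp_smul {𝕂 𝔸 : Type*} [RCLike 𝕂] [NormedRing 𝔸]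
    [NormedAlgebra 𝕂 𝔸] [CompleteSpace 𝔸] (A B K : 𝔸) (t : 𝕂)
    (h : A * exp (t • A) + exp (t • A) * B = K * exp (t • A)) :
    HasDerivAt (fun u : 𝕂 => exp (u • A) * exp (u • B)) (K * (exp (t • A) * exp (t • B))) t := by
  refine ((hasDerivAt_exp_smul_const' A t).mul (hasDerivAt_exp_smul_const' B t)).congr_deriv ?_
  rw [← mul_assoc (exp (t • A)), ← add_mul, h, mul_assoc]

/- The entrywise sup norm on matrices is not submultiplicative, so we differentiate for the
operator norm and transfer through difference quotients, which see only the common topology. -/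
section linftyOp
attribute [local instance] Matrix.linftyOpNormedAddCommGroup Matrix.linftyOpNormedSpace
  Matrix.linftyOpNormedRing Matrix.linftyOpNormedAlgebra

theorem Matrix.tendsto_slope_exp_smul_mul_exp_smul {n : Type*} [Fintype n] [DecidableEq n]
    (A B K : Matrix n n ℂ) (t : ℝ)
    (h : A * exp (t • A) + exp (t • A) * B = K * exp (t • A)) :
    Filter.Tendsto (slope (fun u : ℝ => exp (u • A) * exp (u • B)) t) (nhdsWithin t {t}ᶜ)
      (nhds (K * (exp (t • A) * exp (t • B)))) :=
  hasDerivAt_iff_tendsto_slope.mp (hasDerivAt_exp_smul_mul_exp_smul A B K t h)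

end linftyOp

attribute [local instance] Matrix.normedAddCommGroup Matrix.normedSpace

theorem Matrix.hasDerivAt_exp_smul_mul_exp_smul {n : Type*} [Fintype n] [DecidableEq n]
    (A B K : Matrix n n ℂ) (t : ℝ)
    (h : A * exp (t • A) + exp (t • A) * B = K * exp (t • A)) :
    HasDerivAt (fun u : ℝ => exp (u • A) * exp (u • B)) (K * (exp (t • A) * exp (t • B))) t :=
  hasDerivAt_iff_tendsto_slope.mpr (tendsto_slope_exp_smul_mul_exp_smul A B K t h)

def pauliX : Matrix (Fin 2) (Fin 2) ℂ := !![0, 1; 1, 0]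

def pauliY : Matrix (Fin 2) (Fin 2) ℂ := !![0, -Complex.I; Complex.I, 0]

def pauliZ : Matrix (Fin 2) (Fin 2) ℂ := !![1, 0; 0, -1]

noncomputable def rotZ (θ : ℝ) : Matrix (Fin 2) (Fin 2) ℂ :=
  exp ((-Complex.I * ((θ / 2 : ℝ) : ℂ)) • pauliZ)

theorem rotZ_eq_diagonal (θ : ℝ) :
    rotZ θ = diagonal ![Complex.exp (-(θ / 2 : ℝ) * Complex.I),
      Complex.exp ((θ / 2 : ℝ) * Complex.I)] := by
  have hdiag : (-Complex.I * ((θ / 2 : ℝ) : ℂ)) • pauliZ =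
      diagonal ![-(θ / 2 : ℝ) * Complex.I, (θ / 2 : ℝ) * Complex.I] := by
    ext i j; fin_cases i <;> fin_cases j <;> simp [pauliZ] <;> ring
  rw [rotZ, hdiag, exp_diagonal]
  congr 1
  ext i; fin_cases i <;> simp [Complex.exp_eq_exp_ℂ]

theorem commute_rotZ_pauliZ (θ : ℝ) : Commute (rotZ θ) pauliZ :=
  ((Commute.refl pauliZ).smul_left _).exp_left

theorem rotZ_mul_pauliX (θ : ℝ) :
    rotZ θ * pauliX = ((Real.cos θ : ℂ) • pauliX + (Real.sin θ : ℂ) • pauliY) * rotZ θ := by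
  set x : ℂ := (θ : ℂ)
  have h₁ : Complex.exp (-(x / 2 * Complex.I)) =
      (Complex.cos x - Complex.sin x * Complex.I) * Complex.exp (x / 2 * Complex.I) := by
    calc Complex.exp (-(x / 2 * Complex.I))
        = Complex.exp (-x * Complex.I) * Complex.exp (x / 2 * Complex.I) := by
          rw [← Complex.exp_add]; ring_nf
      _ = _ := by rw [Complex.exp_mul_I, Complex.cos_neg, Complex.sin_neg]; ring
  have h₂ : Complex.exp (x / 2 * Complex.I) =
      (Complex.cos x + Complex.sin x * Complex.I) * Complex.exp (-(x / 2 * Complex.I)) := by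
    rw [← Complex.exp_mul_I, ← Complex.exp_add]
    ring_nf
  rw [rotZ_eq_diagonal]
  ext i j; fin_cases i <;> fin_cases j <;> simp [pauliX, pauliY, Matrix.mul_apply, Fin.sum_univ_succ]
  · linear_combination h₁
  · linear_combination h₂

theorem rotZ_rotatingFrame (ω₀ ω₁ ωrf t : ℝ) :
    (-Complex.I * ((ωrf / 2 : ℝ) : ℂ)) • pauliZ * rotZ (ωrf * t) +
      rotZ (ωrf * t) *
        ((-Complex.I) • ((((ω₀ - ωrf) / 2 : ℝ) : ℂ) • pauliZ + ((ω₁ : ℂ) / 2) • pauliX)) =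
    (-Complex.I) • (((ω₀ : ℂ) / 2) • pauliZ +
        ((Real.cos (ωrf * t) : ℝ) : ℂ) • (((ω₁ : ℂ) / 2) • pauliX) +
        ((Real.sin (ωrf * t) : ℝ) : ℂ) • (((ω₁ : ℂ) / 2) • pauliY)) * rotZ (ωrf * t) := by
  simp only [mul_smul_comm, mul_add, (commute_rotZ_pauliZ _).eq, rotZ_mul_pauliX]
  simp only [add_mul, smul_mul_assoc]
  push_cast
  module

/-- The exact propagator of a qubit driven by a circularly polarized field:
`U(t) = exp(-i ω_rf t σ_z / 2) exp(-i t ((ω₀-ω_rf)/2 σ_z + ω₁/2 σ_x))` satisfies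
`U(0) = 1` and the Schrödinger equation `i U' = H(t) U` with
`H(t) = (ω₀/2) σ_z + cos(ω_rf t)(ω₁/2) σ_x + sin(ω_rf t)(ω₁/2) σ_y`. -/
theorem stmt_13 (ω₀ ω₁ ωrf : ℝ)
    (σx σy σz : Matrix (Fin 2) (Fin 2) ℂ)
    (hσx : σx = !![0, 1; 1, 0])
    (hσy : σy = !![0, -Complex.I; Complex.I, 0])
    (hσz : σz = !![1, 0; 0, -1])
    (H : ℝ → Matrix (Fin 2) (Fin 2) ℂ)
    (hH : ∀ t : ℝ, H t = ((ω₀ : ℂ) / 2) • σz +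
        ((Real.cos (ωrf * t) : ℝ) : ℂ) • (((ω₁ : ℂ) / 2) • σx) +
        ((Real.sin (ωrf * t) : ℝ) : ℂ) • (((ω₁ : ℂ) / 2) • σy))
    (U : ℝ → Matrix (Fin 2) (Fin 2) ℂ)
    (hU : ∀ t : ℝ, U t =
        NormedSpace.exp ((-Complex.I * ((ωrf * t / 2 : ℝ) : ℂ)) • σz) *
        NormedSpace.exp ((-Complex.I * (t : ℂ)) •
          ((((ω₀ - ωrf) / 2 : ℝ) : ℂ) • σz + ((ω₁ : ℂ) / 2) • σx))) :
    U 0 = 1 ∧ ∀ t : ℝ, HasDerivAt U ((-Complex.I) • (H t * U t)) t := by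
  obtain rfl : σx = pauliX := hσx
  obtain rfl : σy = pauliY := hσy
  obtain rfl : σz = pauliZ := hσz
  set A := (-Complex.I * ((ωrf / 2 : ℝ) : ℂ)) • pauliZ with hA_def
  set B := (-Complex.I) • ((((ω₀ - ωrf) / 2 : ℝ) : ℂ) • pauliZ + ((ω₁ : ℂ) / 2) • pauliX)
    with hB_def
  have hA (t : ℝ) : exp (t • A) = rotZ (ωrf * t) := by
    rw [rotZ, hA_def, ← smul_assoc, Complex.real_smul]
    push_cast; ring_nf
  have hU_eq : U = fun t => exp (t • A) * exp (t • B) := by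
    funext t
    rw [hU, hA, hB_def, ← smul_assoc, Complex.real_smul, mul_comm (t : ℂ)]
    rfl
  refine ⟨by simp [hU_eq], fun t => ?_⟩
  rw [hH, ← smul_mul_assoc, hU_eq]
  exact Matrix.hasDerivAt_exp_smul_mul_exp_smul A B _ t
    (by rw [hA]; exact rotZ_rotatingFrame ω₀ ω₁ ωrf t)
end

section
/- Let n be a finite type, H : ℝ → Matrix n n ℂ twice continuously differentiable with H(t) Hermitian for all t, and let U : ℝ → Matrix n n ℂ satisfy U(0) = 1 and HasDerivAt U (-i • (H(t) * U(t))) t for all t. Then there exists C ≥ 0 such that for all Δt ∈ (0, 1], ‖U(Δt) - exp(-i Δt • H(Δt/2))‖ ≤ C · Δt³ (operator norm); i.e. the single-step error of the midpoint exponential integrator is O(Δt³). -/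
/-!
Both `U Δt` and `exp (-i Δt H(Δt/2))` agree up to `O(Δt³)` with
`1 - i Δt H(0) - Δt²/2 (i H'(0) + H(0)²)`. For `U` this is Taylor's theorem, since
`U''' = -i (H'' U + 2 H' U' + H U'')` is continuous, hence bounded on `[0, 1]`. For the
exponential, the series beyond its quadratic term is `O(Δt³)`, and the midpoint expansion
`H(Δt/2) = H(0) + Δt/2 H'(0) + O(Δt²)` produces exactly the `-i Δt²/2 H'(0)` term of `U`.
-/

open scoped Matrix.Norms.L2Operator Nat

open Set

theorem exists_norm_le_on_Icc {E : Type*} [SeminormedAddGroup E] {g : ℝ → E} (hg : Continuous g) :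
    ∃ M, 0 ≤ M ∧ ∀ s ∈ Icc (0 : ℝ) 1, ‖g s‖ ≤ M := by
  obtain ⟨M, hM⟩ := isCompact_Icc.exists_bound_of_continuousOn hg.continuousOn
  exact ⟨M, (norm_nonneg _).trans (hM 0 ⟨le_rfl, zero_le_one⟩), hM⟩

section Taylor

variable {E : Type*} [NormedAddCommGroup E] [NormedSpace ℝ E] {f f' f'' f''' : ℝ → E} {M t : ℝ}

theorem norm_le_mul_pow_succ_of_hasDerivAt {m : ℕ} (hf : ∀ s, HasDerivAt f (f' s) s)
    (h0 : f 0 = 0) (ht : 0 ≤ t) (hb : ∀ s ∈ Icc 0 t, ‖f' s‖ ≤ M * s ^ m) :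
    ‖f t‖ ≤ M / (m + 1) * t ^ (m + 1) := by
  have hB : ∀ s, HasDerivAt (fun s => M / (m + 1) * s ^ (m + 1)) (M * s ^ m) s := fun s => by
    refine ((hasDerivAt_pow (m + 1) s).const_mul (M / (m + 1))).congr_deriv ?_
    push_cast
    field_simp
  refine image_norm_le_of_norm_deriv_right_le_deriv_boundary
    (Differentiable.continuous fun s => (hf s).differentiableAt).continuousOn
    (fun s _ => (hf s).hasDerivWithinAt) (by simp [h0]) hB
    (fun s hs => hb s (Ico_subset_Icc_self hs)) ⟨ht, le_rfl⟩

theorem norm_sub_le_mul_of_hasDerivAt (hf : ∀ s, HasDerivAt f (f' s) s) (ht : 0 ≤ t)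
    (hb : ∀ s ∈ Icc 0 t, ‖f' s‖ ≤ M) : ‖f t - f 0‖ ≤ M * t := by
  simpa using norm_le_mul_pow_succ_of_hasDerivAt (m := 0) (fun s => (hf s).sub_const (f 0))
    (sub_self _) ht (by simpa using hb)

theorem norm_taylor₁_le (hf : ∀ s, HasDerivAt f (f' s) s) (hf' : ∀ s, HasDerivAt f' (f'' s) s)
    (ht : 0 ≤ t) (hb : ∀ s ∈ Icc 0 t, ‖f'' s‖ ≤ M) :
    ‖f t - f 0 - t • f' 0‖ ≤ M / 2 * t ^ 2 := by
  have hd : ∀ s, HasDerivAt (fun s => f s - f 0 - s • f' 0) (f' s - f' 0) s := fun s =>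
    (((hf s).sub_const (f 0)).sub ((hasDerivAt_id s).smul_const (f' 0))).congr_deriv (by simp)
  have := norm_le_mul_pow_succ_of_hasDerivAt (m := 1) hd (by simp) ht fun s hs => by
    simpa using norm_sub_le_mul_of_hasDerivAt hf' hs.1
      fun r hr => hb r ⟨hr.1, hr.2.trans hs.2⟩
  norm_num at this
  exact this

theorem norm_taylor₂_le (hf : ∀ s, HasDerivAt f (f' s) s) (hf' : ∀ s, HasDerivAt f' (f'' s) s)
    (hf'' : ∀ s, HasDerivAt f'' (f''' s) s) (ht : 0 ≤ t) (hb : ∀ s ∈ Icc 0 t, ‖f''' s‖ ≤ M) :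
    ‖f t - f 0 - t • f' 0 - (t ^ 2 / 2) • f'' 0‖ ≤ M / 6 * t ^ 3 := by
  have hd : ∀ s, HasDerivAt (fun s => f s - f 0 - s • f' 0 - (s ^ 2 / 2) • f'' 0)
      (f' s - f' 0 - s • f'' 0) s := fun s => by
    refine ((((hf s).sub_const (f 0)).sub ((hasDerivAt_id s).smul_const (f' 0))).sub
      (((hasDerivAt_pow 2 s).div_const 2).smul_const (f'' 0))).congr_deriv ?_
    simp
  have := norm_le_mul_pow_succ_of_hasDerivAt (m := 2) hd (by simp) ht fun s hs =>
    norm_taylor₁_le hf' hf'' hs.1 fun r hr => hb r ⟨hr.1, hr.2.trans hs.2⟩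
  norm_num at this
  convert this using 1
  ring

theorem ContDiff.hasDerivAt_deriv_deriv (hf : ContDiff ℝ 2 f) (t : ℝ) :
    HasDerivAt (deriv f) (deriv (deriv f) t) t :=
  ((hf.iterate_deriv' 1 1).differentiable one_ne_zero t).hasDerivAt

theorem ContDiff.continuous_deriv_deriv (hf : ContDiff ℝ 2 f) : Continuous (deriv (deriv f)) :=
  (hf.iterate_deriv' 0 2).continuous

end Taylor

theorem norm_exp_sub_sum_le {𝔸 : Type*} [NormedRing 𝔸] [NormedAlgebra ℝ 𝔸] [CompleteSpace 𝔸]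
    (x : 𝔸) {N : ℕ} (hN : 0 < N) :
    ‖NormedSpace.exp x - ∑ k ∈ Finset.range N, (k !⁻¹ : ℝ) • x ^ k‖ ≤ ‖x‖ ^ N * Real.exp ‖x‖ := by
  rw [NormedSpace.exp_eq_tsum ℝ]
  dsimp only
  rw [← (NormedSpace.expSeries_summable' (𝕂 := ℝ) x).sum_add_tsum_nat_add N, add_sub_cancel_left]
  refine tsum_of_norm_bounded (g := fun i => ‖x‖ ^ N * (‖x‖ ^ i / i !)) ?_ fun i => ?_
  · rw [Real.exp_eq_exp_ℝ]
    exact (NormedSpace.expSeries_div_hasSum_exp ‖x‖).mul_left _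
  · rw [norm_smul, norm_inv, Real.norm_natCast]
    calc ((i + N) ! : ℝ)⁻¹ * ‖x ^ (i + N)‖ ≤ (i ! : ℝ)⁻¹ * ‖x‖ ^ (i + N) := by
          refine mul_le_mul ?_ (norm_pow_le' x (by omega)) (norm_nonneg _) (by positivity)
          gcongr
          omega
      _ = ‖x‖ ^ N * (‖x‖ ^ i / i !) := by ring

section Propagator

open Complex

variable {𝔸 : Type*} [NormedRing 𝔸] [NormedAlgebra ℂ 𝔸]

noncomputable def propagatorQuadratic (H₀ H₁ : 𝔸) (t : ℝ) : 𝔸 :=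
  1 - (I * t) • H₀ - ((t : ℂ) ^ 2 / 2) • (I • H₁ + H₀ * H₀)

theorem exists_norm_propagator_sub_propagatorQuadratic_le {H U : ℝ → 𝔸} (hH : ContDiff ℝ 2 H)
    (hU0 : U 0 = 1) (hU : ∀ t, HasDerivAt U (-I • (H t * U t)) t) :
    ∃ C, 0 ≤ C ∧ ∀ t ∈ Icc (0 : ℝ) 1,
      ‖U t - propagatorQuadratic (H 0) (deriv H 0) t‖ ≤ C * t ^ 3 := by
  have hH₁ t : HasDerivAt H (deriv H t) t := (hH.differentiable two_ne_zero t).hasDerivAt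
  have hH₂ := hH.hasDerivAt_deriv_deriv
  have : Continuous U := continuous_iff_continuousAt.2 fun t => (hU t).continuousAt
  have := hH.continuous
  have := hH.continuous_deriv one_le_two
  have := hH.continuous_deriv_deriv
  set U₁ : ℝ → 𝔸 := fun t => -I • (H t * U t)
  set U₂ : ℝ → 𝔸 := fun t => -I • (deriv H t * U t + H t * U₁ t)
  set U₃ : ℝ → 𝔸 := fun t =>
    -I • (deriv (deriv H) t * U t + deriv H t * U₁ t + (deriv H t * U₁ t + H t * U₂ t))
  have hU₁ t : HasDerivAt U₁ (U₂ t) t := ((hH₁ t).mul (hU t)).const_smul (-I)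
  have hU₂ t : HasDerivAt U₂ (U₃ t) t :=
    (((hH₂ t).mul (hU t)).add ((hH₁ t).mul (hU₁ t))).const_smul (-I)
  have : Continuous U₁ := by fun_prop
  have : Continuous U₂ := by fun_prop
  obtain ⟨M, hM0, hM⟩ := exists_norm_le_on_Icc (show Continuous U₃ by fun_prop)
  refine ⟨M / 6, by positivity, fun t ht => ?_⟩
  calc ‖U t - propagatorQuadratic (H 0) (deriv H 0) t‖
      = ‖U t - U 0 - t • U₁ 0 - (t ^ 2 / 2) • U₂ 0‖ := by
        congr 1
        simp only [propagatorQuadratic, U₂, U₁, hU0, mul_one, mul_smul_comm, ← Complex.coe_smul]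
        match_scalars <;> ring_nf
        simp only [I_sq]
        ring
    _ ≤ M / 6 * t ^ 3 := norm_taylor₂_le hU hU₁ hU₂ ht.1 fun s hs => hM s ⟨hs.1, hs.2.trans ht.2⟩

theorem sum_range_three_sub_propagatorQuadratic (K H₀ H₁ : 𝔸) (t : ℝ) :
    ∑ k ∈ Finset.range 3, (k !⁻¹ : ℝ) • ((-I * t) • K) ^ k - propagatorQuadratic H₀ H₁ t =
      (-I * t) • (K - H₀ - (t / 2) • H₁) - ((t : ℂ) ^ 2 / 2) • (K * K - H₀ * H₀) := by
  simp only [Finset.sum_range_succ, Finset.sum_range_zero, propagatorQuadratic, pow_succ, pow_zero,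
    one_mul, smul_mul_smul_comm, ← Complex.coe_smul]
  match_scalars <;> simp <;> ring_nf
  rw [I_sq]
  ring

theorem norm_mul_self_sub_mul_self_le {R : Type*} [NonUnitalSeminormedRing R] (a b : R) :
    ‖a * a - b * b‖ ≤ (‖a‖ + ‖b‖) * ‖a - b‖ := by
  rw [show a * a - b * b = a * (a - b) + (a - b) * b by noncomm_ring]
  calc _ ≤ ‖a‖ * ‖a - b‖ + ‖a - b‖ * ‖b‖ :=
        (norm_add_le _ _).trans (add_le_add (norm_mul_le _ _) (norm_mul_le _ _))
    _ = (‖a‖ + ‖b‖) * ‖a - b‖ := by ring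

theorem exists_norm_midpoint_sum_sub_propagatorQuadratic_le {H : ℝ → 𝔸} (hH : ContDiff ℝ 2 H) :
    ∃ C, 0 ≤ C ∧ ∀ t ∈ Icc (0 : ℝ) 1,
      ‖∑ k ∈ Finset.range 3, (k !⁻¹ : ℝ) • ((-I * t) • H (t / 2)) ^ k
        - propagatorQuadratic (H 0) (deriv H 0) t‖ ≤ C * t ^ 3 := by
  have hH₁ t : HasDerivAt H (deriv H t) t := (hH.differentiable two_ne_zero t).hasDerivAt
  obtain ⟨M₀, hM₀, hH₀b⟩ := exists_norm_le_on_Icc hH.continuous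
  obtain ⟨M₁, hM₁, hH₁b⟩ := exists_norm_le_on_Icc (hH.continuous_deriv one_le_two)
  obtain ⟨M₂, hM₂, hH₂b⟩ := exists_norm_le_on_Icc hH.continuous_deriv_deriv
  refine ⟨M₂ / 8 + M₀ * M₁ / 2, by positivity, fun t ht => ?_⟩
  have ht₂ : t / 2 ∈ Icc (0 : ℝ) 1 := ⟨by linarith [ht.1], by linarith [ht.2]⟩
  have hsub : Icc 0 (t / 2) ⊆ Icc (0 : ℝ) 1 := Icc_subset_Icc_right ht₂.2
  set K := H (t / 2)
  have hlin : ‖(-I * t) • (K - H 0 - (t / 2) • deriv H 0)‖ ≤ M₂ / 8 * t ^ 3 := by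
    rw [norm_smul, show ‖-I * (t : ℂ)‖ = t by simp [abs_of_nonneg ht.1]]
    have := norm_taylor₁_le hH₁ hH.hasDerivAt_deriv_deriv ht₂.1 fun s hs => hH₂b s (hsub hs)
    nlinarith [ht.1]
  have hsq : ‖((t : ℂ) ^ 2 / 2) • (K * K - H 0 * H 0)‖ ≤ M₀ * M₁ / 2 * t ^ 3 := by
    have hK : ‖K - H 0‖ ≤ M₁ * (t / 2) :=
      norm_sub_le_mul_of_hasDerivAt hH₁ ht₂.1 fun s hs => hH₁b s (hsub hs)
    have hKH : ‖K‖ + ‖H 0‖ ≤ M₀ + M₀ := add_le_add (hH₀b _ ht₂) (hH₀b 0 ⟨le_rfl, zero_le_one⟩)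
    calc _ = t ^ 2 / 2 * ‖K * K - H 0 * H 0‖ := by simp [norm_smul, abs_of_nonneg ht.1]
      _ ≤ t ^ 2 / 2 * ((M₀ + M₀) * (M₁ * (t / 2))) := by
          gcongr
          exact (norm_mul_self_sub_mul_self_le K (H 0)).trans (by gcongr)
      _ = M₀ * M₁ / 2 * t ^ 3 := by ring
  rw [sum_range_three_sub_propagatorQuadratic]
  exact (norm_sub_le_of_le hlin hsq).trans_eq (by ring)

theorem exists_norm_exp_midpoint_sub_sum_le [CompleteSpace 𝔸] {H : ℝ → 𝔸} (hH : Continuous H) :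
    ∃ C, 0 ≤ C ∧ ∀ t ∈ Icc (0 : ℝ) 1,
      ‖NormedSpace.exp ((-I * t) • H (t / 2))
        - ∑ k ∈ Finset.range 3, (k !⁻¹ : ℝ) • ((-I * t) • H (t / 2)) ^ k‖ ≤ C * t ^ 3 := by
  obtain ⟨M, hM, hHb⟩ := exists_norm_le_on_Icc hH
  refine ⟨M ^ 3 * Real.exp M, by positivity, fun t ht => ?_⟩
  have hA : ‖(-I * t) • H (t / 2)‖ ≤ M * t := by
    rw [norm_smul, show ‖-I * (t : ℂ)‖ = t by simp [abs_of_nonneg ht.1], mul_comm]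
    exact mul_le_mul_of_nonneg_right (hHb _ ⟨by linarith [ht.1], by linarith [ht.2]⟩) ht.1
  have hA₁ : ‖(-I * t) • H (t / 2)‖ ≤ M := hA.trans (mul_le_of_le_one_right hM ht.2)
  have : 0 ≤ t := ht.1
  calc _ ≤ ‖(-I * t) • H (t / 2)‖ ^ 3 * Real.exp ‖(-I * t) • H (t / 2)‖ :=
        norm_exp_sub_sum_le _ three_pos
    _ ≤ (M * t) ^ 3 * Real.exp M := by gcongr
    _ = M ^ 3 * Real.exp M * t ^ 3 := by ring

end Propagator

theorem stmt_15_general {n : Type*} [Fintype n] [DecidableEq n]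
    (H : ℝ → Matrix n n ℂ) (hH : ContDiff ℝ 2 H)
    (U : ℝ → Matrix n n ℂ) (hU0 : U 0 = 1)
    (hU : ∀ t : ℝ, HasDerivAt U ((-Complex.I) • (H t * U t)) t) :
    ∃ C : ℝ, 0 ≤ C ∧ ∀ Δt ∈ Set.Ioc (0 : ℝ) 1,
      ‖U Δt - NormedSpace.exp ((-Complex.I * (Δt : ℂ)) • H (Δt / 2))‖ ≤ C * Δt ^ 3 := by
  obtain ⟨C₁, hC₁, hUP⟩ := exists_norm_propagator_sub_propagatorQuadratic_le hH hU0 hU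
  obtain ⟨C₂, hC₂, hSP⟩ := exists_norm_midpoint_sum_sub_propagatorQuadratic_le hH
  obtain ⟨C₃, hC₃, hES⟩ := exists_norm_exp_midpoint_sub_sum_le hH.continuous
  refine ⟨C₁ + C₂ + C₃, by positivity, fun Δt hΔt => ?_⟩
  have ht := Ioc_subset_Icc_self hΔt
  set P := propagatorQuadratic (H 0) (deriv H 0) Δt
  set A := (-Complex.I * (Δt : ℂ)) • H (Δt / 2)
  set S := ∑ k ∈ Finset.range 3, (k !⁻¹ : ℝ) • A ^ k
  calc ‖U Δt - NormedSpace.exp A‖ = ‖U Δt - P - (S - P) - (NormedSpace.exp A - S)‖ := by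
        congr 1
        abel
    _ ≤ ‖U Δt - P‖ + ‖S - P‖ + ‖NormedSpace.exp A - S‖ :=
        (norm_sub_le _ _).trans (add_le_add_left (norm_sub_le _ _) _)
    _ ≤ C₁ * Δt ^ 3 + C₂ * Δt ^ 3 + C₃ * Δt ^ 3 :=
        add_le_add (add_le_add (hUP Δt ht) (hSP Δt ht)) (hES Δt ht)
    _ = (C₁ + C₂ + C₃) * Δt ^ 3 := by ring

/-- Local error of the midpoint exponential (first-order Magnus) integrator: for a twice
continuously differentiable Hermitian-valued `H` and the exact propagator `U`, the
single-step error satisfies `‖U(Δt) - exp(-i Δt H(Δt/2))‖ ≤ C Δt³` for `Δt ∈ (0,1]`. -/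
theorem stmt_15 {n : Type*} [Fintype n] [DecidableEq n]
    (H : ℝ → Matrix n n ℂ) (hH : ContDiff ℝ 2 H)
    (hHerm : ∀ t : ℝ, (H t).IsHermitian)
    (U : ℝ → Matrix n n ℂ) (hU0 : U 0 = 1)
    (hU : ∀ t : ℝ, HasDerivAt U ((-Complex.I) • (H t * U t)) t) :
    ∃ C : ℝ, 0 ≤ C ∧ ∀ Δt ∈ Set.Ioc (0 : ℝ) 1,
      ‖U Δt - NormedSpace.exp ((-Complex.I * (Δt : ℂ)) • H (Δt / 2))‖ ≤ C * Δt ^ 3 :=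
  stmt_15_general H hH U hU0 hU
end
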